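/- arXiv:2512.19112 — 2 statements merged into one kernel-verified Lean document; each statement's English description precedes it below -/
import Mathlib

section
/- Consider the hyperplane arrangement in $\mathbb{R}^3$ restricted to the open cube $(0,1)^3$ consisting of the hyperplanes $x_1 + x_2 + x_3 = 1$, $x_1 + x_2 + x_3 = 2$, $x_1 + x_2 = 1$, $x_1 + x_3 = 1$, $x_2 + x_3 = 1$. The complement of the union of these hyperplanes in the open cube has exactly $10$ connected components. -/
/-!
Inside a convex set, the points with a prescribed sign vector with respect to finitely many
affine hyperplanes form a convex, hence connected, relatively open cell, so the connected
components of the complement of the arrangement correspond to the realized sign vectors.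
For the five hyperplanes at hand, `x₀ + x₁ + x₂ < 1` forces every pair sum below `1` and
`x₀ + x₁ + x₂ > 2` forces every pair sum above `1`, while in the slab between them all eight
sign patterns of the three pair sums occur: `1 + 1 + 8 = 10` cells.
-/

open Set

theorem Nat.card_connectedComponents_eq_card_range {X β : Type*} [TopologicalSpace X]
    [TopologicalSpace β] [TotallyDisconnectedSpace β] {f : X → β} (hf : Continuous f)
    (hfiber : ∀ b, IsPreconnected (f ⁻¹' {b})) :
    Nat.card (ConnectedComponents X) = Nat.card (range f) := by
  have hinj : Function.Injective hf.connectedComponentsLift := by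
    refine ConnectedComponents.surjective_coe.forall₂.2 fun x y hxy => ?_
    rw [hf.connectedComponentsLift_apply_coe, hf.connectedComponentsLift_apply_coe] at hxy
    exact ConnectedComponents.coe_eq_coe'.2 <|
      (hfiber (f y)).subset_connectedComponent rfl hxy
  have hrange : range hf.connectedComponentsLift = range f := by
    rw [← ConnectedComponents.surjective_coe.range_comp, hf.connectedComponentsLift_comp_coe]
  rw [Nat.card_congr (Equiv.ofInjective _ hinj), hrange]

section Arrangement

variable {E ι : Type*} [AddCommGroup E] [Module ℝ E] [TopologicalSpace E]
  (l : ι → E →L[ℝ] ℝ) (c : ι → ℝ)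

noncomputable def signVector (x : E) : ι → Bool := fun i => decide (l i x < c i)

def openCell (v : ι → Bool) : Set E := {x | ∀ i, if v i then l i x < c i else c i < l i x}

def arrangementComplement (K : Set E) : Set E := {x | x ∈ K ∧ ∀ i, l i x ≠ c i}

variable {l c}

theorem isOpen_openCell [Finite ι] (v : ι → Bool) : IsOpen (openCell l c v) := by
  rw [openCell, ofPred_forall]
  refine isOpen_iInter_of_finite fun i => ?_
  cases v i
  · exact isOpen_lt continuous_const (l i).continuous
  · exact isOpen_lt (l i).continuous continuous_const

theorem convex_openCell (v : ι → Bool) : Convex ℝ (openCell l c v) := by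
  rw [openCell, ofPred_forall]
  refine convex_iInter fun i => ?_
  cases v i
  · exact convex_halfSpace_gt (l i).toLinearMap.isLinear _
  · exact convex_halfSpace_lt (l i).toLinearMap.isLinear _

theorem signVector_eq_iff {x : E} (hx : ∀ i, l i x ≠ c i) (v : ι → Bool) :
    signVector l c x = v ↔ x ∈ openCell l c v := by
  simp only [funext_iff, signVector, openCell, mem_ofPred_eq]
  refine forall_congr' fun i => ?_
  cases v i
  · simp [(hx i).symm.le_iff_lt]
  · simp

theorem ne_of_mem_openCell {v : ι → Bool} {x : E} (hx : x ∈ openCell l c v) (i : ι) :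
    l i x ≠ c i := by
  have := hx i
  split_ifs at this
  exacts [this.ne, this.ne']

variable [IsTopologicalAddGroup E] [ContinuousSMul ℝ E] [Finite ι]

theorem Nat.card_connectedComponents_arrangementComplement {K : Set E} (hK : Convex ℝ K) :
    Nat.card (ConnectedComponents (arrangementComplement l c K)) =
      Nat.card (signVector l c '' arrangementComplement l c K) := by
  set U := arrangementComplement l c K
  have hfiber (v : ι → Bool) :
      (fun x : U => signVector l c x) ⁻¹' {v} = Subtype.val ⁻¹' openCell l c v := by
    ext x
    exact signVector_eq_iff x.2.2 v
  have hcont : Continuous fun x : U => signVector l c x := by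
    refine continuous_discrete_rng.2 fun v => ?_
    rw [hfiber]
    exact (isOpen_openCell v).preimage continuous_subtype_val
  rw [Nat.card_connectedComponents_eq_card_range hcont fun v => ?_, image_eq_range]
  rw [hfiber, ← Topology.IsInducing.subtypeVal.isPreconnected_image, Subtype.image_preimage_coe]
  have : U ∩ openCell l c v = K ∩ openCell l c v :=
    subset_antisymm (inter_subset_inter_left _ fun x hx => hx.1)
      fun x hx => ⟨⟨hx.1, ne_of_mem_openCell hx.2⟩, hx.2⟩
  rw [this]
  exact (hK.inter (convex_openCell v)).isPreconnected

end Arrangement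

def coordSum {n : ℕ} (s : Finset (Fin n)) : (Fin n → ℝ) →L[ℝ] ℝ :=
  ∑ i ∈ s, ContinuousLinearMap.proj i

@[simp]
theorem coordSum_apply {n : ℕ} (s : Finset (Fin n)) (x : Fin n → ℝ) :
    coordSum s x = ∑ i ∈ s, x i := by
  simp [coordSum]

namespace Bondal

def forms : Fin 5 → (Fin 3 → ℝ) →L[ℝ] ℝ :=
  ![coordSum .univ, coordSum .univ, coordSum {0, 1}, coordSum {0, 2}, coordSum {1, 2}]

def levels : Fin 5 → ℝ := ![1, 2, 1, 1, 1]

def complement : Set (Fin 3 → ℝ) :=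
  arrangementComplement forms levels (univ.pi fun _ => Ioo 0 1)

theorem mem_complement_iff {x : Fin 3 → ℝ} :
    x ∈ complement ↔ (∀ i, 0 < x i ∧ x i < 1) ∧
      x 0 + x 1 + x 2 ≠ 1 ∧ x 0 + x 1 + x 2 ≠ 2 ∧
      x 0 + x 1 ≠ 1 ∧ x 0 + x 2 ≠ 1 ∧ x 1 + x 2 ≠ 1 := by
  simp [complement, arrangementComplement, forms, levels, Fin.forall_fin_succ, Fin.sum_univ_three]

theorem signVector_eq (x : Fin 3 → ℝ) :
    signVector forms levels x = ![decide (x 0 + x 1 + x 2 < 1), decide (x 0 + x 1 + x 2 < 2),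
      decide (x 0 + x 1 < 1), decide (x 0 + x 2 < 1), decide (x 1 + x 2 < 1)] := by
  ext i
  fin_cases i <;> simp [signVector, forms, levels, Fin.sum_univ_three]

def IsRealizable (v : Fin 5 → Bool) : Prop :=
  v = ![true, true, true, true, true] ∨ v = ![false, false, false, false, false] ∨
    ∃ a b c, v = ![false, true, a, b, c]

instance : DecidablePred IsRealizable := fun _ => by unfold IsRealizable; infer_instance

theorem isRealizable_signVector {x : Fin 3 → ℝ} (hx : x ∈ complement) :
    IsRealizable (signVector forms levels x) := by
  obtain ⟨hcube, h1, h2, -, -, -⟩ := mem_complement_iff.1 hx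
  obtain ⟨hx0, hx0'⟩ := hcube 0
  obtain ⟨hx1, hx1'⟩ := hcube 1
  obtain ⟨hx2, hx2'⟩ := hcube 2
  rw [signVector_eq]
  rcases h1.lt_or_gt with ht | ht
  · left
    simp [ht, show x 0 + x 1 + x 2 < 2 by linarith, show x 0 + x 1 < 1 by linarith,
      show x 0 + x 2 < 1 by linarith, show x 1 + x 2 < 1 by linarith]
  rcases h2.lt_or_gt with ht' | ht'
  · exact Or.inr <| Or.inr ⟨decide (x 0 + x 1 < 1), decide (x 0 + x 2 < 1),
      decide (x 1 + x 2 < 1), by simp [ht.not_gt, ht']⟩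
  · right; left
    simp [ht.not_gt, ht'.not_gt, show ¬ x 0 + x 1 < 1 by linarith,
      show ¬ x 0 + x 2 < 1 by linarith, show ¬ x 1 + x 2 < 1 by linarith]

theorem exists_signVector_eq {v : Fin 5 → Bool} (hv : IsRealizable v) :
    ∃ x ∈ complement, signVector forms levels x = v := by
  simp only [mem_complement_iff, signVector_eq]
  rcases hv with rfl | rfl | ⟨a, b, c, rfl⟩
  · refine ⟨![1/4, 1/4, 1/4], ?_, ?_⟩ <;> norm_num [Fin.forall_fin_succ, Matrix.cons_val_two]
  · refine ⟨![9/10, 9/10, 9/10], ?_, ?_⟩ <;>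
      norm_num [Fin.forall_fin_succ, Matrix.cons_val_two]
  · -- the pair sums of this point are `1 ± 1/10`, with the sign prescribed by `a`, `b`, `c`
    let s : Bool → ℝ := fun b => if b then -1 else 1
    refine ⟨![1/2 + (s a + s b - s c) / 20, 1/2 + (s a - s b + s c) / 20,
      1/2 + (s b + s c - s a) / 20], ?_, ?_⟩ <;>
      cases a <;> cases b <;> cases c <;> norm_num [s, Fin.forall_fin_succ, Matrix.cons_val_two]

theorem image_signVector :
    signVector forms levels '' complement = {v | IsRealizable v} :=
  Set.ext fun _ => ⟨by rintro ⟨x, hx, rfl⟩; exact isRealizable_signVector hx,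
    exists_signVector_eq⟩

theorem card_isRealizable : Nat.card {v | IsRealizable v} = 10 := by
  rw [Nat.card_eq_fintype_card]
  rfl

end Bondal

/-- The complement, inside the open unit cube `(0,1)³`, of the five hyperplanes
`x₁+x₂+x₃ = 1`, `x₁+x₂+x₃ = 2`, `x₁+x₂ = 1`, `x₁+x₃ = 1`, `x₂+x₃ = 1`
has exactly 10 connected components. -/
theorem stmt_14
    (U : Set (Fin 3 → ℝ))
    (hU : U = {x | (∀ i, 0 < x i ∧ x i < 1) ∧
      x 0 + x 1 + x 2 ≠ 1 ∧ x 0 + x 1 + x 2 ≠ 2 ∧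
      x 0 + x 1 ≠ 1 ∧ x 0 + x 2 ≠ 1 ∧ x 1 + x 2 ≠ 1}) :
    Nat.card (ConnectedComponents U) = 10 := by
  obtain rfl : U = Bondal.complement :=
    hU.trans (Set.ext fun _ => Bondal.mem_complement_iff.symm)
  rw [Bondal.complement, Nat.card_connectedComponents_arrangementComplement
    (convex_pi fun _ _ => convex_Ioo 0 1), ← Bondal.complement, Bondal.image_signVector,
    Bondal.card_isRealizable]
end

section
/- Let $\Sigma(1) \subset N$ be a finite set of primitive lattice vectors closed under negation ($u \in \Sigma(1) \Rightarrow -u \in \Sigma(1)$) and spanning $N_\mathbb{R}$. Then for every $\theta \in M_\mathbb{R}$, the set $S_\theta = \{ k \mid \lceil \langle \theta, u \rangle \rceil - 1 < \langle k, u \rangle \le \lceil \langle \theta, u \rangle \rceil \ \forall u \in \Sigma(1) \}$ is relatively open in its affine hull, i.e., $S_\theta$ equals the relative interior of its closure. -/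
/-!
Write `q_u = ⟨θ, u⟩`. Membership of `k` in `S_θ` says `⌈⟨k, u⟩⌉ = ⌈q_u⌉` for every `u`;
applied to `-u` it also gives `⌊⟨k, u⟩⌋ = ⌊q_u⌋`. Hence `⟨k, u⟩ = q_u` when `q_u` is an
integer and `⟨k, u⟩ ∈ (⌊q_u⌋, ⌈q_u⌉)` otherwise, so `S_θ` is a closed affine subspace
intersected with an open set, and such a set lies in the relative interior of its closure.
Conversely, a point of the relative interior of the closure cannot lie on a hyperplane
`⟨k, u⟩ = ⌈q_u⌉ - 1` that `S_θ` stays strictly above: one could step past that point, away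
from a point of `S_θ`, without leaving the closure.
-/

open Set Topology

theorem eq_of_floor_eq_of_ceil_eq {α : Type*} [Ring α] [LinearOrder α] [IsOrderedRing α]
    [FloorRing α] {x q : α} (hq : q ∈ range Int.cast) (hf : ⌊x⌋ = ⌊q⌋) (hc : ⌈x⌉ = ⌈q⌉) :
    x = q := by
  refine le_antisymm ?_ ?_
  · calc x ≤ ⌈x⌉ := Int.le_ceil x
      _ = q := by rw [hc, (Int.ceil_eq_self_iff_mem q).2 hq]
  · calc q = ⌊x⌋ := by rw [hf, (Int.floor_eq_self_iff_mem q).2 hq]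
      _ ≤ x := Int.floor_le x

section IntrinsicInterior

variable {E : Type*} [AddCommGroup E] [Module ℝ E] [TopologicalSpace E]

theorem AffineSubspace.inter_subset_intrinsicInterior_closure (A : AffineSubspace ℝ E)
    (hA : IsClosed (A : Set E)) {U : Set E} (hU : IsOpen U) :
    (A : Set E) ∩ U ⊆ intrinsicInterior ℝ (closure ((A : Set E) ∩ U)) := by
  intro x hx
  have hspan : (affineSpan ℝ (closure ((A : Set E) ∩ U)) : Set E) ⊆ A :=
    affineSpan_le.2 (closure_minimal inter_subset_left hA)
  refine ⟨⟨x, subset_affineSpan ℝ _ (subset_closure hx)⟩, ?_, rfl⟩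
  refine (hU.preimage continuous_subtype_val).subset_interior_iff.2
    (fun z hz => (subset_closure ⟨hspan z.2, hz⟩ : (z : E) ∈ closure ((A : Set E) ∩ U))) ?_
  exact hx.2

variable [IsTopologicalAddGroup E] [ContinuousSMul ℝ E]

theorem intrinsicInterior_closure_subset_preimage_Ioi {s : Set E} (f : E →L[ℝ] ℝ) {a : ℝ}
    (hs : s ⊆ f ⁻¹' Ioi a) : intrinsicInterior ℝ (closure s) ⊆ f ⁻¹' Ioi a := by
  rintro _ ⟨y, hy, rfl⟩
  have hys : (y : E) ∈ closure s := interior_subset (s := Subtype.val ⁻¹' closure s) hy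
  obtain ⟨k, hk⟩ : s.Nonempty := closure_nonempty_iff.1 ⟨_, hys⟩
  have hcl : closure s ⊆ f ⁻¹' Ici a :=
    closure_minimal (hs.trans (preimage_mono Ioi_subset_Ici_self))
      (isClosed_Ici.preimage f.continuous)
  by_contra hya
  have hfy : f y = a := le_antisymm (not_lt.1 hya) (hcl hys)
  -- Moving from `y` slightly away from `k` stays in `closure s` but pushes `f` below `a`.
  let γ : ℝ → affineSpan ℝ (closure s) := fun t =>
    ⟨t • ((y : E) - k) + y, by
      simpa using AffineSubspace.smul_vsub_vadd_mem _ t y.2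
        (subset_affineSpan ℝ _ (subset_closure hk)) y.2⟩
  have hγ : Continuous γ := by fun_prop
  have hγ0 : γ 0 = y := by ext; simp [γ]
  have hev : ∀ᶠ t in 𝓝[>] (0 : ℝ), γ t ∈ interior (Subtype.val ⁻¹' closure s) ∧ 0 < t :=
    ((hγ.continuousAt.eventually_mem (isOpen_interior.mem_nhds (hγ0 ▸ hy))).filter_mono
      nhdsWithin_le_nhds).and self_mem_nhdsWithin
  obtain ⟨t, ht, htpos⟩ := hev.exists
  have hγt := hcl (interior_subset (s := Subtype.val ⁻¹' closure s) ht)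
  simp only [mem_preimage, mem_Ici, γ, map_add, map_smul, map_sub, smul_eq_mul, hfy] at hγt
  nlinarith [show a < f k from hs hk]

theorem intrinsicInterior_closure_iInter_preimage_Ioc_subset {ι : Type*} (f : ι → E →L[ℝ] ℝ)
    (a b : ι → ℝ) :
    intrinsicInterior ℝ (closure (⋂ i, f i ⁻¹' Ioc (a i) (b i))) ⊆
      ⋂ i, f i ⁻¹' Ioc (a i) (b i) := by
  refine subset_iInter fun i x hx => ⟨?_, ?_⟩
  · exact intrinsicInterior_closure_subset_preimage_Ioi (f i)
      (fun y hy => (mem_iInter.1 hy i).1) hx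
  · exact closure_minimal (fun y hy => (mem_iInter.1 hy i).2)
      (isClosed_Iic.preimage (f i).continuous) (intrinsicInterior_subset hx)

end IntrinsicInterior

section BondalStratum

variable {E ι : Type*} [AddCommGroup E] [Module ℝ E] [TopologicalSpace E]
  (f : ι → E →L[ℝ] ℝ) (θ : E)

def bondalStratum : Set E :=
  ⋂ ρ, f ρ ⁻¹' Ioc ((⌈f ρ θ⌉ : ℝ) - 1) ⌈f ρ θ⌉

def integralLocus : AffineSubspace ℝ E :=
  AffineSubspace.mk' θ (⨅ ρ, ⨅ (_ : f ρ θ ∈ range Int.cast), LinearMap.ker (f ρ : E →ₗ[ℝ] ℝ))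

variable {f θ}

theorem mem_integralLocus_iff {k : E} :
    k ∈ integralLocus f θ ↔ ∀ ρ, f ρ θ ∈ range Int.cast → f ρ k = f ρ θ := by
  simp [integralLocus, AffineSubspace.mem_mk', Submodule.mem_iInf, sub_eq_zero]

theorem mem_bondalStratum_iff {k : E} : k ∈ bondalStratum f θ ↔ ∀ ρ, ⌈f ρ k⌉ = ⌈f ρ θ⌉ := by
  simp [bondalStratum, Int.ceil_eq_iff]

theorem floor_eq_of_mem_bondalStratum (hneg : ∀ ρ, ∃ ρ', f ρ' = -f ρ) {k : E}
    (hk : k ∈ bondalStratum f θ) (ρ : ι) : ⌊f ρ k⌋ = ⌊f ρ θ⌋ := by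
  obtain ⟨ρ', hρ'⟩ := hneg ρ
  simpa [hρ', Int.ceil_neg] using mem_bondalStratum_iff.1 hk ρ'

theorem bondalStratum_eq_inter (hneg : ∀ ρ, ∃ ρ', f ρ' = -f ρ) :
    bondalStratum f θ =
      (integralLocus f θ : Set E) ∩ ⋂ ρ, f ρ ⁻¹' Ioo ((⌈f ρ θ⌉ : ℝ) - 1) (⌊f ρ θ⌋ + 1) := by
  ext k
  constructor
  · intro hk
    have hc := mem_bondalStratum_iff.1 hk
    have hf := floor_eq_of_mem_bondalStratum hneg hk
    refine ⟨?_, mem_iInter.2 fun ρ => ⟨(Int.ceil_eq_iff.1 (hc ρ)).1, ?_⟩⟩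
    · exact mem_integralLocus_iff.2 fun ρ hρ => eq_of_floor_eq_of_ceil_eq hρ (hf ρ) (hc ρ)
    · simpa [hf ρ] using Int.lt_floor_add_one (f ρ k)
  · rintro ⟨hA, hU⟩
    refine mem_iInter.2 fun ρ => ⟨(mem_iInter.1 hU ρ).1, ?_⟩
    by_cases hρ : f ρ θ ∈ range Int.cast
    · exact (mem_integralLocus_iff.1 hA ρ hρ).symm ▸ Int.le_ceil _
    · rw [(Int.ceil_eq_floor_add_one_iff_notMem _).2 hρ]
      exact_mod_cast (mem_iInter.1 hU ρ).2.le

end BondalStratum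

open Finset in
theorem stmt_15_general (n : ℕ) (ι : Type*) [Fintype ι] (u : ι → (Fin n → ℤ))
    (hneg : ∀ ρ, ∃ ρ', u ρ' = -u ρ)
    (pair : (Fin n → ℝ) → (Fin n → ℤ) → ℝ)
    (hpair : ∀ k v, pair k v = ∑ i, k i * (v i : ℝ))
    (θ : Fin n → ℝ) (S : Set (Fin n → ℝ))
    (hS : S = {k | ∀ ρ,
      (⌈pair θ (u ρ)⌉ : ℝ) - 1 < pair k (u ρ) ∧ pair k (u ρ) ≤ (⌈pair θ (u ρ)⌉ : ℝ)}) :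
    S = intrinsicInterior ℝ (closure S) := by
  let f : ι → (Fin n → ℝ) →L[ℝ] ℝ := fun ρ =>
    LinearMap.toContinuousLinearMap ((dotProductBilin ℝ ℝ).flip fun i => (u ρ i : ℝ))
  have hf : ∀ ρ k, f ρ k = pair k (u ρ) := fun ρ k => by simp [f, hpair, dotProduct]
  have hfneg : ∀ ρ, ∃ ρ', f ρ' = -f ρ := fun ρ =>
    (hneg ρ).imp fun ρ' h => by ext k; simp [hf, hpair, h]
  have hSθ : S = bondalStratum f θ := by ext k; simp [hS, bondalStratum, hf]
  rw [hSθ]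
  refine subset_antisymm ?_ (intrinsicInterior_closure_iInter_preimage_Ioc_subset _ _ _)
  rw [bondalStratum_eq_inter hfneg]
  exact (integralLocus f θ).inter_subset_intrinsicInterior_closure
    (AffineSubspace.closed_of_finiteDimensional _)
    (isOpen_iInter_of_finite fun ρ => isOpen_Ioo.preimage (f ρ).continuous)

open Finset in
/-- If the finite set of primitive ray generators is closed under negation and spans,
then each Bondal stratum `S_θ` is relatively open in its affine hull: it equals the
relative (intrinsic) interior of its closure. -/
theorem stmt_15 (n : ℕ) (ι : Type*) [Fintype ι] (u : ι → (Fin n → ℤ))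
    (hprim : ∀ ρ, (Finset.univ : Finset (Fin n)).gcd (fun i => (u ρ i).natAbs) = 1)
    (hneg : ∀ ρ, ∃ ρ', u ρ' = -u ρ)
    (hspan : Submodule.span ℝ (Set.range fun ρ => (fun i => ((u ρ i : ℝ)))) = ⊤)
    (pair : (Fin n → ℝ) → (Fin n → ℤ) → ℝ)
    (hpair : ∀ k v, pair k v = ∑ i, k i * (v i : ℝ))
    (θ : Fin n → ℝ) (S : Set (Fin n → ℝ))
    (hS : S = {k | ∀ ρ,
      (⌈pair θ (u ρ)⌉ : ℝ) - 1 < pair k (u ρ) ∧ pair k (u ρ) ≤ (⌈pair θ (u ρ)⌉ : ℝ)}) :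
    S = intrinsicInterior ℝ (closure S) :=
  stmt_15_general n ι u hneg pair hpair θ S hS
end
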